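/- arXiv:1412.3178 — 2 statements merged into one kernel-verified Lean document; each statement's English description precedes it below -/
import Mathlib

section
/- Let ν be a strictly convex norm on ℝⁿ, let C ⊆ ℝⁿ be a nonempty closed set, and let a > 1 be a real number. Then at each point x ∈ ℝⁿ at which the function x ↦ dist_ν(x, C)^a is (Fréchet) differentiable, the best ν-approximation of x in C is unique. -/
/-!
The distance function `d = distNu ν C` is `1`-Lipschitz for `ν`, so its derivative `L` at `x`
satisfies `L v ≤ ν v`. Moving from `x` towards a best approximation `y`, `d` drops at unit rate,
so `L (x - y) ≥ d x`. If `y₁ ≠ y₂` are both best approximations, then `L (x - m) ≥ d x` for their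
midpoint `m`, whereas strict convexity gives `ν (x - m) < d x`. Differentiability of `d ^ a`
passes to `d` where `d x > 0`; where `d x = 0` the only best approximation is `x` itself.
Existence holds because `ν` dominates a multiple of the Euclidean norm, so a minimizer can be
sought in a compact set.
-/

noncomputable def distNu {E : Type*} [AddCommGroup E] (ν : E → ℝ) (C : Set E) (x : E) : ℝ :=
  sInf ((fun y => ν (x - y)) '' C)

open Filter Topology

section Seminorm

variable {E : Type*} [NormedAddCommGroup E] [NormedSpace ℝ E] [FiniteDimensional ℝ E]

theorem Seminorm.continuous_of_finiteDimensional (p : Seminorm ℝ E) : Continuous p :=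
  p.convexOn.locallyLipschitz.continuous

theorem Seminorm.exists_pos_mul_norm_le (p : Seminorm ℝ E) (hp : ∀ z, p z = 0 → z = 0) :
    ∃ c > 0, ∀ z, c * ‖z‖ ≤ p z := by
  rcases subsingleton_or_nontrivial E with hE | hE
  · exact ⟨1, one_pos, fun z => by simp [Subsingleton.elim z 0]⟩
  obtain ⟨u, hu, hmin⟩ := (isCompact_sphere (0 : E) 1).exists_isMinOn
    (NormedSpace.sphere_nonempty.mpr zero_le_one) p.continuous_of_finiteDimensional.continuousOn
  have hu₀ : u ≠ 0 := ne_zero_of_mem_unit_sphere ⟨u, hu⟩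
  refine ⟨p u, (apply_nonneg p u).lt_of_ne' (mt (hp u) hu₀), fun z => ?_⟩
  rcases eq_or_ne z 0 with rfl | hz
  · simp
  have hz' : 0 < ‖z‖ := norm_pos_iff.mpr hz
  have h : p u ≤ p (‖z‖⁻¹ • z) :=
    hmin (by simp [norm_smul, hz'.ne'] : ‖z‖⁻¹ • z ∈ Metric.sphere 0 1)
  rw [map_smul_eq_mul, norm_inv, norm_norm] at h
  rwa [le_inv_mul_iff₀ hz', mul_comm] at h

end Seminorm

def Seminorm.IsStrictlyConvex {E : Type*} [AddCommGroup E] [Module ℝ E] (p : Seminorm ℝ E) :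
    Prop :=
  ∀ u w, u ≠ w → p u = 1 → p w = 1 → ∀ t : ℝ, 0 < t → t < 1 → p (t • u + (1 - t) • w) < 1

theorem Seminorm.IsStrictlyConvex.apply_smul_add_lt {E : Type*} [AddCommGroup E] [Module ℝ E]
    {p : Seminorm ℝ E} (hp : p.IsStrictlyConvex) {u w : E} {r t : ℝ} (hr : 0 < r) (huw : u ≠ w)
    (hu : p u = r) (hw : p w = r) (ht₀ : 0 < t) (ht₁ : t < 1) :
    p (t • u + (1 - t) • w) < r := by
  have h := hp (r⁻¹ • u) (r⁻¹ • w) (by simpa [hr.ne'] using huw)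
    (by rw [map_smul_eq_mul, hu, norm_inv, Real.norm_of_nonneg hr.le, inv_mul_cancel₀ hr.ne'])
    (by rw [map_smul_eq_mul, hw, norm_inv, Real.norm_of_nonneg hr.le, inv_mul_cancel₀ hr.ne'])
    t ht₀ ht₁
  rwa [smul_comm t, smul_comm (1 - t), ← smul_add, map_smul_eq_mul, norm_inv,
    Real.norm_of_nonneg hr.le, inv_mul_lt_iff₀ hr, mul_one] at h

section Calculus

variable {E : Type*} [NormedAddCommGroup E] [NormedSpace ℝ E]

theorem HasFDerivAt.apply_le_of_eventually_le {f : E → ℝ} {L : E →L[ℝ] ℝ} {x v : E} {c : ℝ}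
    (hf : HasFDerivAt f L x) (h : ∀ᶠ t in 𝓝[>] (0 : ℝ), f (x + t • v) ≤ f x + t * c) :
    L v ≤ c := by
  have hline : HasDerivAt (fun t : ℝ => x + t • v) v 0 := by
    simpa using ((hasDerivAt_id (0 : ℝ)).smul_const v).const_add x
  have hslope := (hasDerivAt_iff_tendsto_slope.mp
    (hf.comp_hasDerivAt_of_eq 0 hline (by simp))).mono_left (nhdsGT_le_nhdsNE 0)
  refine le_of_tendsto hslope ?_
  filter_upwards [h, self_mem_nhdsWithin] with t ht (htpos : 0 < t)
  rw [slope_def_field, sub_zero, div_le_iff₀ htpos]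
  simp only [Function.comp_apply, zero_smul, add_zero]
  linarith

theorem DifferentiableAt.of_rpow {f : E → ℝ} {x : E} {a : ℝ} (hf : ∀ z, 0 ≤ f z) (hx : 0 < f x)
    (ha : a ≠ 0) (h : DifferentiableAt ℝ (fun z => f z ^ a) x) : DifferentiableAt ℝ f x := by
  refine (h.rpow_const (p := a⁻¹) (Or.inl (Real.rpow_pos_of_pos hx a).ne')).congr_of_eventuallyEq
    (Eventually.of_forall fun z => ?_)
  simp only [← Real.rpow_mul (hf z), mul_inv_cancel₀ ha, Real.rpow_one]

end Calculus

namespace distNu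

section Module

variable {E : Type*} [AddCommGroup E] [Module ℝ E] (p : Seminorm ℝ E) {C : Set E} {x y z : E}

theorem nonneg : 0 ≤ distNu p C x :=
  Real.sInf_nonneg <| by rintro _ ⟨y, -, rfl⟩; exact apply_nonneg p _

theorem le_of_mem (hy : y ∈ C) : distNu p C x ≤ p (x - y) :=
  csInf_le ⟨0, by rintro _ ⟨y, -, rfl⟩; exact apply_nonneg p _⟩ ⟨y, hy, rfl⟩

theorem le_of_forall_le (hC : C.Nonempty) {b : ℝ} (h : ∀ y ∈ C, b ≤ p (x - y)) :
    b ≤ distNu p C x :=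
  le_csInf (hC.image _) (by rintro _ ⟨y, hy, rfl⟩; exact h y hy)

theorem le_add_seminorm_sub (hC : C.Nonempty) : distNu p C x ≤ distNu p C z + p (x - z) := by
  suffices distNu p C x - p (x - z) ≤ distNu p C z by linarith
  refine le_of_forall_le p hC fun y hy => ?_
  have := map_add_le_add p (x - z) (z - y)
  rw [sub_add_sub_cancel] at this
  linarith [le_of_mem p (x := x) hy]

theorem add_smul_sub_le (hy : y ∈ C) (hxy : p (x - y) = distNu p C x) {t : ℝ} (ht : t ≤ 1) :
    distNu p C (x + t • (y - x)) ≤ (1 - t) * distNu p C x := by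
  calc distNu p C (x + t • (y - x)) ≤ p ((1 - t) • (x - y)) := by
        convert le_of_mem p hy using 2; module
    _ = (1 - t) * distNu p C x := by
        rw [map_smul_eq_mul, Real.norm_of_nonneg (by linarith), hxy]

end Module

theorem exists_apply_sub_eq {E : Type*} [NormedAddCommGroup E] [NormedSpace ℝ E]
    [FiniteDimensional ℝ E] (p : Seminorm ℝ E) (hp : ∀ z, p z = 0 → z = 0) {C : Set E}
    (hC : C.Nonempty) (hCc : IsClosed C) (x : E) : ∃ y ∈ C, p (x - y) = distNu p C x := by
  obtain ⟨c, hc, hpc⟩ := p.exists_pos_mul_norm_le hp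
  obtain ⟨y₀, hy₀⟩ := hC
  have hcont : Continuous fun y => p (x - y) :=
    p.continuous_of_finiteDimensional.comp (continuous_const.sub continuous_id)
  have hK : IsCompact (C ∩ {y | p (x - y) ≤ p (x - y₀)}) := by
    refine Metric.isCompact_of_isClosed_isBounded (hCc.inter (isClosed_le hcont continuous_const))
      ((Metric.isBounded_closedBall (x := x) (r := p (x - y₀) / c)).subset fun y hy => ?_)
    rw [Metric.mem_closedBall, dist_comm, dist_eq_norm, le_div_iff₀' hc]
    exact (hpc (x - y)).trans hy.2
  obtain ⟨y, ⟨hyC, -⟩, hmin⟩ :=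
    hK.exists_isMinOn ⟨y₀, hy₀, le_refl (p (x - y₀))⟩ hcont.continuousOn
  refine ⟨y, hyC, le_antisymm (le_of_forall_le p ⟨y₀, hy₀⟩ fun z hz => ?_) (le_of_mem p hyC)⟩
  by_cases hz₀ : p (x - z) ≤ p (x - y₀)
  · exact hmin ⟨hz, hz₀⟩
  · exact (hmin ⟨hy₀, le_refl (p (x - y₀))⟩).trans (le_of_not_ge hz₀)

end distNu

section Derivative

variable {E : Type*} [NormedAddCommGroup E] [NormedSpace ℝ E] {p : Seminorm ℝ E} {C : Set E}
  {x y y₁ y₂ : E} {L : E →L[ℝ] ℝ}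

theorem HasFDerivAt.apply_le_seminorm_of_distNu (hC : C.Nonempty)
    (hL : HasFDerivAt (distNu p C) L x) (v : E) : L v ≤ p v := by
  refine hL.apply_le_of_eventually_le (eventually_mem_nhdsWithin.mono fun t (ht : 0 < t) => ?_)
  have := distNu.le_add_seminorm_sub p hC (x := x + t • v) (z := x)
  rwa [add_sub_cancel_left, map_smul_eq_mul, Real.norm_of_nonneg ht.le] at this

theorem HasFDerivAt.distNu_le_apply_sub (hL : HasFDerivAt (distNu p C) L x) (hy : y ∈ C)
    (hxy : p (x - y) = distNu p C x) : distNu p C x ≤ L (x - y) := by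
  have : L (y - x) ≤ -distNu p C x := by
    refine hL.apply_le_of_eventually_le (mem_of_superset (Ioo_mem_nhdsGT one_pos) fun t ht => ?_)
    exact (distNu.add_smul_sub_le p hy hxy ht.2.le).trans_eq (by ring)
  rw [← neg_sub, map_neg]
  linarith

theorem HasFDerivAt.eq_of_distNu_eq (hp : p.IsStrictlyConvex) (hC : C.Nonempty)
    (hL : HasFDerivAt (distNu p C) L x) (hd : 0 < distNu p C x) (hy₁ : y₁ ∈ C)
    (h₁ : p (x - y₁) = distNu p C x) (hy₂ : y₂ ∈ C) (h₂ : p (x - y₂) = distNu p C x) :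
    y₁ = y₂ := by
  by_contra hne
  have hmid := hp.apply_smul_add_lt hd (sub_right_injective.ne hne) h₁ h₂ one_half_pos
    one_half_lt_one
  have hL₁ := hL.distNu_le_apply_sub hy₁ h₁
  have hL₂ := hL.distNu_le_apply_sub hy₂ h₂
  have hLmid := hL.apply_le_seminorm_of_distNu hC
    ((1 / 2 : ℝ) • (x - y₁) + (1 - 1 / 2 : ℝ) • (x - y₂))
  simp only [map_add, map_smul, smul_eq_mul] at hLmid
  linarith

end Derivative

/-- If `ν` is a strictly convex norm on `ℝⁿ`, `C` a nonempty closed set, `a > 1`, and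
`x ↦ distNu ν C x ^ a` is Fréchet differentiable at `x`, then `x` has a unique best
`ν`-approximation in `C`. -/
theorem stmt1 {n : ℕ} (ν : EuclideanSpace ℝ (Fin n) → ℝ)
    (hν_eq : ∀ x, ν x = 0 ↔ x = 0)
    (hν_smul : ∀ (c : ℝ) (x), ν (c • x) = |c| * ν x)
    (hν_add : ∀ x y, ν (x + y) ≤ ν x + ν y)
    (hν_sc : ∀ x y, x ≠ y → ν x = 1 → ν y = 1 →
      ∀ t : ℝ, 0 < t → t < 1 → ν (t • x + (1 - t) • y) < 1)
    (C : Set (EuclideanSpace ℝ (Fin n))) (hCne : C.Nonempty) (hCcl : IsClosed C)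
    (a : ℝ) (ha : 1 < a)
    (x : EuclideanSpace ℝ (Fin n))
    (hdiff : DifferentiableAt ℝ (fun z => distNu ν C z ^ a) x) :
    ∃! y, y ∈ C ∧ ν (x - y) = distNu ν C x := by
  let p : Seminorm ℝ (EuclideanSpace ℝ (Fin n)) :=
    Seminorm.of ν hν_add fun c z => by rw [hν_smul, Real.norm_eq_abs]
  have hp : ∀ z, p z = 0 → z = 0 := fun z => (hν_eq z).mp
  obtain ⟨y, hyC, hy⟩ := distNu.exists_apply_sub_eq p hp hCne hCcl x
  refine ⟨y, ⟨hyC, hy⟩, fun y' ⟨hy'C, hy'⟩ => ?_⟩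
  rcases (distNu.nonneg p (C := C) (x := x)).eq_or_lt with hd | hd
  · rw [← sub_eq_zero.mp (hp _ (hy'.trans hd.symm)), sub_eq_zero.mp (hp _ (hy.trans hd.symm))]
  · have hL := (hdiff.of_rpow (fun z => distNu.nonneg p (x := z)) hd
      (zero_lt_one.trans ha).ne').hasFDerivAt
    exact HasFDerivAt.eq_of_distNu_eq (p := p) hν_sc hCne hL hd hy'C hy' hyC hy
end

section
/- Let ν be a norm on ℝⁿ, let C ⊆ ℝⁿ be): a nonempty closed set, let f(x) := dist_ν(x, C), and suppose f is (Fréchet) differentiable at a point x ∈ ℝⁿ with x ∉ C. If y⁰ ∈ C is a best ν-approximation of x, then the differential of f at x belongs to the subdifferential of ν at x − y⁰, i.e., Df(x) ∈ ∂ν(x − y⁰). -/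
open Set Filter

theorem HasFDerivAt.add_apply_sub_le_of_convexOn {E : Type*} [NormedAddCommGroup E]
    [NormedSpace ℝ E] {f g : E → ℝ} {f' : E →L[ℝ] ℝ} {s : Set E} {x z : E}
    (hf : HasFDerivAt f f' x) (hg : ConvexOn ℝ s g) (hfg : ∀ w ∈ s, f w ≤ g w)
    (hfx : f x = g x) (hx : x ∈ s) (hz : z ∈ s) :
    g x + f' (z - x) ≤ g z := by
  set ℓ : ℝ → E := ⇑(AffineMap.lineMap (k := ℝ) x z) with hℓ
  have hline : HasDerivAt (f ∘ ℓ) (f' (z - x)) 0 :=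
    (by simpa [hℓ] using hf : HasFDerivAt f f' (ℓ 0)).comp_hasDerivAt 0
      AffineMap.hasDerivAt_lineMap
  have hslope_le : ∀ t ∈ Ioo (0 : ℝ) 1, t⁻¹ • ((f ∘ ℓ) (0 + t) - (f ∘ ℓ) 0) ≤ g z - g x := by
    rintro t ⟨ht₀, ht₁⟩
    have hconv : g (ℓ t) ≤ (1 - t) * g x + t * g z := by
      simpa [hℓ, AffineMap.lineMap_apply_module] using
        hg.2 hx hz (by linarith : 0 ≤ 1 - t) ht₀.le (by ring)
    have hseg : f (ℓ t) ≤ g (ℓ t) := hfg _ (hg.1.lineMap_mem hx hz ⟨ht₀.le, ht₁.le⟩)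
    rw [smul_eq_mul, inv_mul_le_iff₀ ht₀]
    simp only [Function.comp_apply, zero_add, hℓ, AffineMap.lineMap_apply_zero, hfx]
    linarith
  have hderiv_le : f' (z - x) ≤ g z - g x :=
    le_of_tendsto hline.tendsto_slope_zero_right
      (mem_of_superset (Ioo_mem_nhdsGT one_pos) hslope_le)
  linarith

theorem distNu_le_of_mem {E : Type*} [AddCommGroup E] {ν : E → ℝ} (hν : ∀ z, 0 ≤ ν z)
    {C : Set E} {x y : E} (hy : y ∈ C) : distNu ν C x ≤ ν (x - y) :=
  csInf_le ⟨0, by rintro _ ⟨w, -, rfl⟩; exact hν _⟩ (mem_image_of_mem _ hy)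

theorem stmt6_general {n : ℕ} (ν : EuclideanSpace ℝ (Fin n) → ℝ)
    (hν_smul : ∀ (c : ℝ) (x), ν (c • x) = |c| * ν x)
    (hν_add : ∀ x y, ν (x + y) ≤ ν x + ν y)
    (C : Set (EuclideanSpace ℝ (Fin n)))
    (x : EuclideanSpace ℝ (Fin n))
    (hdiff : DifferentiableAt ℝ (distNu ν C) x)
    (y₀ : EuclideanSpace ℝ (Fin n)) (hy₀ : y₀ ∈ C)
    (hbest : ν (x - y₀) = distNu ν C x) :
    ∀ y : EuclideanSpace ℝ (Fin n),
      ν (x - y₀) + fderiv ℝ (distNu ν C) x (y - (x - y₀)) ≤ ν y := by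
  intro y
  let p : Seminorm ℝ (EuclideanSpace ℝ (Fin n)) :=
    Seminorm.of ν hν_add (by simpa only [Real.norm_eq_abs] using hν_smul)
  have hconv : ConvexOn ℝ univ (fun w => ν (w - y₀)) := by
    have hp := p.convexOn.translate_right (-y₀)
    simp only [preimage_univ, Function.comp_def, neg_add_eq_sub] at hp
    exact hp
  have hdist_le : ∀ w ∈ univ, distNu ν C w ≤ ν (w - y₀) :=
    fun w _ => distNu_le_of_mem (apply_nonneg p) hy₀
  have key := hdiff.hasFDerivAt.add_apply_sub_le_of_convexOn hconv hdist_le hbest.symm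
    (mem_univ x) (mem_univ (y + y₀))
  rwa [add_sub_cancel_right, ← sub_sub_eq_add_sub] at key

/-- Let `ν` be a norm on `ℝⁿ`, `C` a nonempty closed set, `f := distNu ν C`, and suppose
`f` is Fréchet differentiable at `x ∉ C`.  If `y⁰ ∈ C` is a best `ν`-approximation of `x`,
then the differential of `f` at `x` belongs to the subdifferential of `ν` at `x − y⁰`,
i.e. `ν y ≥ ν (x - y⁰) + Df(x)(y - (x - y⁰))` for all `y`. -/
theorem stmt6 {n : ℕ} (ν : EuclideanSpace ℝ (Fin n) → ℝ)
    (hν_eq : ∀ x, ν x = 0 ↔ x = 0)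
    (hν_smul : ∀ (c : ℝ) (x), ν (c • x) = |c| * ν x)
    (hν_add : ∀ x y, ν (x + y) ≤ ν x + ν y)
    (C : Set (EuclideanSpace ℝ (Fin n))) (hCne : C.Nonempty) (hCcl : IsClosed C)
    (x : EuclideanSpace ℝ (Fin n)) (hx : x ∉ C)
    (hdiff : DifferentiableAt ℝ (distNu ν C) x)
    (y₀ : EuclideanSpace ℝ (Fin n)) (hy₀ : y₀ ∈ C)
    (hbest : ν (x - y₀) = distNu ν C x) :
    ∀ y : EuclideanSpace ℝ (Fin n),
      ν (x - y₀) + fderiv ℝ (distNu ν C) x (y - (x - y₀)) ≤ ν y :=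
  stmt6_general ν hν_smul hν_add C x hdiff y₀ hy₀ hbest
end
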